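/- arXiv:math/0511660 — 2 statements merged into one kernel-verified Lean document; each statement's English description precedes it below -/
import Mathlib

section
/- Let g ≥ 2 be an integer, let r ≥ 1 and d be integers, and let h := gcd(r, d). Assume r > h. Then there exist unique integers r_F and d_F satisfying both (1-g)·r_F·r + r_F·d - r·d_F = h and r < h·r_F < 2r. -/
/-!
Write `r = h r'` and `d = h d'` with `r'`, `d'` coprime. Dividing by `h`, the conditions become
`r_F e - r' d_F = 1` and `r' < r_F < 2 r'`, where `e = d' + (1 - g) r'` is coprime to `r'`.
So `r_F` must be an inverse of `e` modulo `r' ≥ 2`; such residues are nonzero, and the window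
`(r', 2r')` contains exactly one representative of each nonzero residue class. Then `d_F` is
determined by `r_F`.
-/

theorem IsCoprime.exists_mul_sub_mul_eq_one_of_lt_of_lt {e n : ℤ} (hcop : IsCoprime e n)
    (hn : 1 < n) : ∃ x y : ℤ, x * e - n * y = 1 ∧ n < x ∧ x < 2 * n := by
  obtain ⟨u, v, huv⟩ := hcop
  have hu : u % n ≠ 0 := by
    intro hu
    have hn1 : n ∣ 1 := huv ▸ dvd_add (dvd_mul_of_dvd_left (Int.dvd_of_emod_eq_zero hu) e)
      (dvd_mul_left n v)
    exact hn.ne' (Int.eq_one_of_dvd_one (by omega) hn1)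
  refine ⟨n + u % n, e - v - u / n * e, ?_, ?_, ?_⟩
  · rw [Int.emod_def]
    linear_combination huv
  · have := Int.emod_nonneg u (by omega : n ≠ 0)
    omega
  · have := Int.emod_lt_of_pos u (by omega : 0 < n)
    omega

theorem IsCoprime.eq_of_mul_sub_mul_eq_one {e n x y x' y' : ℤ} (hcop : IsCoprime e n)
    (h : x * e - n * y = 1) (h' : x' * e - n * y' = 1) (hx : |x - x'| < n) :
    x = x' ∧ y = y' := by
  have hdiff : (x - x') * e = n * (y - y') := by linear_combination h - h'
  have hxx' : x = x' :=
    sub_eq_zero.mp <| Int.eq_zero_of_abs_lt_dvd (hcop.symm.dvd_of_dvd_mul_right ⟨_, hdiff⟩) hx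
  subst hxx'
  have hn : n ≠ 0 := ((abs_nonneg _).trans_lt hx).ne'
  have hyy' : n * (y - y') = 0 := by linear_combination -hdiff
  simpa [hn, sub_eq_zero] using hyy'

theorem IsCoprime.existsUnique_mul_sub_mul_eq_one_of_lt_of_lt {e n : ℤ} (hcop : IsCoprime e n)
    (hn : 1 < n) : ∃! p : ℤ × ℤ, p.1 * e - n * p.2 = 1 ∧ n < p.1 ∧ p.1 < 2 * n := by
  obtain ⟨x, y, hxy, hnx, hx2n⟩ := hcop.exists_mul_sub_mul_eq_one_of_lt_of_lt hn
  refine ⟨(x, y), ⟨hxy, hnx, hx2n⟩, fun ⟨x', y'⟩ ⟨h', hnx', hx2n'⟩ => ?_⟩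
  obtain ⟨rfl, rfl⟩ :=
    hcop.eq_of_mul_sub_mul_eq_one h' hxy (abs_sub_lt_iff.mpr ⟨by omega, by omega⟩)
  rfl

theorem Int.exists_eq_gcd_mul_isCoprime (a b : ℤ) (ha : a ≠ 0) :
    ∃ a' b' : ℤ, a = Int.gcd a b * a' ∧ b = Int.gcd a b * b' ∧ IsCoprime a' b' := by
  obtain ⟨a', b', hcop, ha', hb'⟩ := Int.exists_gcd_one (Int.gcd_pos_of_ne_zero_left b ha)
  exact ⟨a', b', ha'.trans (mul_comm _ _), hb'.trans (mul_comm _ _),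
    Int.isCoprime_iff_gcd_eq_one.mpr hcop⟩

theorem unique_rF_dF_general (g r d : ℤ)
    (h : ℤ) (hh : h = Int.gcd r d) (hlt : h < r) :
    ∃! p : ℤ × ℤ,
      (1 - g) * p.1 * r + p.1 * d - r * p.2 = h ∧ r < h * p.1 ∧ h * p.1 < 2 * r := by
  have hpos : 0 < h := hh ▸ Int.natCast_pos.mpr (Int.gcd_pos_of_ne_zero_left d (by omega))
  obtain ⟨r', d', hr', hd', hcop⟩ := Int.exists_eq_gcd_mul_isCoprime r d (by omega)
  rw [← hh] at hr' hd'
  subst hr' hd'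
  have hr'1 : 1 < r' := (lt_mul_iff_one_lt_right hpos).mp hlt
  have hcop' : IsCoprime (d' + r' * (1 - g)) r' := IsCoprime.add_mul_left_left_iff.mpr hcop.symm
  refine (existsUnique_congr fun p => ?_).mpr
    (hcop'.existsUnique_mul_sub_mul_eq_one_of_lt_of_lt hr'1)
  rw [show (1 - g) * p.1 * (h * r') + p.1 * (h * d') - h * r' * p.2
      = h * (p.1 * (d' + r' * (1 - g)) - r' * p.2) by ring, mul_eq_left₀ hpos.ne',
    show 2 * (h * r') = h * (2 * r') by ring, mul_lt_mul_iff_right₀ hpos,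
    mul_lt_mul_iff_right₀ hpos]

/-- Key numerical lemma of Section 3 of the King–Schofield rationality proof:
for `g ≥ 2`, `r ≥ 1`, `h = gcd(r, d)` with `r > h`, there exist unique integers
`r_F`, `d_F` with `(1-g)·r_F·r + r_F·d - r·d_F = h` and `r < h·r_F < 2r`. -/
theorem unique_rF_dF (g r d : ℤ) (hg : 2 ≤ g) (hr : 1 ≤ r)
    (h : ℤ) (hh : h = Int.gcd r d) (hlt : h < r) :
    ∃! p : ℤ × ℤ,
      (1 - g) * p.1 * r + p.1 * d - r * p.2 = h ∧ r < h * p.1 ∧ h * p.1 < 2 * r :=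
  unique_rF_dF_general g r d h hh hlt
end

section
/- Let g, h, r, d, r_F, d_F be integers with g ≥ 2, h ≥ 1, and (1-g)·r_F·r + r_F·d - r·d_F = h. Set r_1 := h·r_F - r and d_1 := h·d_F - d, and assume 0 ≤ r_1 < r. Then (1-g)·r_1·r_F + r_1·d_F - r_F·d_1 > h. -/
/-- Computation in the proof of Lemma 3.2 of the paper: with `r_1 = h·r_F - r`
and `d_1 = h·d_F - d`, if `g ≥ 2`, `h ≥ 1`, `χ(t_F, t) = h` and `0 ≤ r_1 < r`,
then `χ(t_1, t_F) > h`. -/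
theorem chi_t1_tF_gt (g h r d r_F d_F : ℤ) (hg : 2 ≤ g) (hh : 1 ≤ h)
    (heq : (1 - g) * r_F * r + r_F * d - r * d_F = h)
    (r_1 d_1 : ℤ) (hr1 : r_1 = h * r_F - r) (hd1 : d_1 = h * d_F - d)
    (hr1nn : 0 ≤ r_1) (hr1lt : r_1 < r) :
    (1 - g) * r_1 * r_F + r_1 * d_F - r_F * d_1 > h := by
  subst hr1 hd1
  set X := (1 - g) * (h * r_F - r) * r_F + (h * r_F - r) * d_F - r_F * (h * d_F - d) with hX
  have key : h * X = h * h + (g - 1) * (r * r - (h * r_F - r) * (h * r_F - r)) := by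
    rw [hX]; nlinarith [heq]
  have pos : (g - 1) * (r * r - (h * r_F - r) * (h * r_F - r)) > 0 := by
    apply mul_pos (by linarith)
    nlinarith
  have : h * X > h * h := by linarith
  exact lt_of_mul_lt_mul_left this (by linarith)
end
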